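/- arXiv:1411.4193 — 3 statements merged into one kernel-verified Lean document; each statement's English description precedes it below -/
import Mathlib

section
/- Let B > s₀ and define 𝔠^B(x) := E[(S_{T∧H_B} − x)⁺] for x ∈ ℝ. Then 𝔠^B is convex, and for every x ∈ [0, B): ℙ(S_T > x, M_T < B) = −(right derivative of 𝔠^B at x) − ℙ(M_T ≥ B). -/
open MeasureTheory Set Filter

noncomputable section

/-- The running maximum `M_T(ω) = sup_{t ∈ [0,T]} S_t(ω)`. -/
def runMax {Ω : Type} (S : ℝ → Ω → ℝ) (T : ℝ) (ω : Ω) : ℝ :=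
  ⨆ t : Icc (0:ℝ) T, S t ω

/-- The stopped value `S_{T ∧ H_B}(ω)`, where `H_B` is the first hitting time of
`[B, ∞)` by `S` during the time interval `[0,T]` (`= S_T(ω)` if `B` is not reached). -/
def stopVal {Ω : Type} (S : ℝ → Ω → ℝ) (B T : ℝ) (ω : Ω) : ℝ :=
  S (hittingBtwn S (Ici B) 0 T ω) ω

/-- The event `{H_B ≤ T}`: the level `B` is reached by `S` during `[0,T]`. -/
def hitEvent {Ω : Type} (S : ℝ → Ω → ℝ) (B T : ℝ) : Set Ω :=
  {ω | ∃ t ∈ Icc (0:ℝ) T, B ≤ S t ω}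

/-- `S` is an adapted martingale on the time interval `[0,T]` with continuous sample
paths, a.s. (strictly) positive values, and initial value `s₀`. -/
structure IsPosContMart {Ω : Type} [mΩ : MeasurableSpace Ω]
    (ℙ : Measure Ω) (ℱ : Filtration ℝ mΩ) (S : ℝ → Ω → ℝ) (s₀ T : ℝ) : Prop where
  adapted : ∀ t ∈ Icc (0:ℝ) T, StronglyMeasurable[ℱ t] (S t)
  integrable : ∀ t ∈ Icc (0:ℝ) T, Integrable (S t) ℙ
  mart : ∀ s t : ℝ, s ∈ Icc (0:ℝ) T → t ∈ Icc (0:ℝ) T → s ≤ t →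
    ℙ[S t|ℱ s] =ᵐ[ℙ] S s
  contPaths : ∀ ω, ContinuousOn (fun t => S t ω) (Icc (0:ℝ) T)
  pos : ∀ t ∈ Icc (0:ℝ) T, ∀ᵐ ω ∂ℙ, 0 < S t ω
  init : ∀ᵐ ω ∂ℙ, S 0 ω = s₀

/-!
Since the paths are continuous and `S₀ = s₀ < B`, the stopped value `S_{T∧H_B}` equals `B` on
`{M_T ≥ B}` and `S_T` on `{M_T < B}`, almost surely. So `𝔠^B` is the call function
`x ↦ E[(Y - x)⁺]` of one integrable variable `Y`. It is convex as an average of the convex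
payoffs `(Y - x)⁺`. Its difference quotients on `[x, y]` lie between `-ℙ(Y > x)` and
`-ℙ(Y > y)`, and `ℙ(Y > y) → ℙ(Y > x)` as `y ↓ x` by right-continuity of the distribution
function, so its right derivative is `-ℙ(Y > x)`. For `x < B` the event `{Y > x}` is the disjoint
union of `{S_T > x, M_T < B}` and `{M_T ≥ B}`.
-/

open Topology

section CallFunction

variable {Ω : Type*} [MeasurableSpace Ω] {μ : Measure Ω} {Y Z : Ω → ℝ}

def callFunction (μ : Measure Ω) (Y : Ω → ℝ) (x : ℝ) : ℝ :=
  ∫ ω, max (Y ω - x) 0 ∂μ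

lemma callFunction_congr_ae (h : Y =ᵐ[μ] Z) : callFunction μ Y = callFunction μ Z :=
  funext fun _ => integral_congr_ae <| h.mono fun ω hω => by simp only [hω]

lemma MeasureTheory.Integrable.max_sub_const_zero [IsFiniteMeasure μ] (hY : Integrable Y μ)
    (x : ℝ) : Integrable (fun ω => max (Y ω - x) 0) μ :=
  (hY.sub (integrable_const x)).pos_part

lemma convexOn_callFunction [IsFiniteMeasure μ] (hY : Integrable Y μ) :
    ConvexOn ℝ univ (callFunction μ Y) := by
  refine ⟨convex_univ, fun x _ y _ a b ha hb hab => ?_⟩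
  have hpayoff (ω : Ω) : ConvexOn ℝ univ fun x : ℝ => max (Y ω - x) 0 :=
    ((convexOn_const (Y ω) convex_univ).sub (concaveOn_id convex_univ)).sup
      (convexOn_const 0 convex_univ)
  have hx := (hY.max_sub_const_zero x).const_mul a
  have hy := (hY.max_sub_const_zero y).const_mul b
  calc callFunction μ Y (a • x + b • y)
      ≤ ∫ ω, (a * max (Y ω - x) 0 + b * max (Y ω - y) 0) ∂μ :=
        integral_mono (hY.max_sub_const_zero _) (hx.add hy)
          fun ω => (hpayoff ω).2 trivial trivial ha hb hab
    _ = a • callFunction μ Y x + b • callFunction μ Y y := by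
        rw [integral_add hx hy, integral_const_mul, integral_const_mul]
        rfl

lemma callFunction_sub_callFunction [IsFiniteMeasure μ] (hY : Integrable Y μ) (x y : ℝ) :
    callFunction μ Y x - callFunction μ Y y
      = ∫ ω, (max (Y ω - x) 0 - max (Y ω - y) 0) ∂μ :=
  (integral_sub (hY.max_sub_const_zero x) (hY.max_sub_const_zero y)).symm

lemma measureReal_mul_le_callFunction_sub [IsFiniteMeasure μ] (hY : Integrable Y μ)
    (hm : Measurable Y) {x y : ℝ} (hxy : x ≤ y) :
    μ.real {ω | y < Y ω} * (y - x) ≤ callFunction μ Y x - callFunction μ Y y := by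
  have hs : MeasurableSet {ω | y < Y ω} := measurableSet_lt measurable_const hm
  rw [callFunction_sub_callFunction hY, ← smul_eq_mul, ← integral_indicator_const _ hs]
  refine integral_mono ((integrable_const _).indicator hs)
    ((hY.max_sub_const_zero x).sub (hY.max_sub_const_zero y)) fun ω => ?_
  simp only [indicator_apply, mem_ofPred_eq]
  split_ifs with h <;> simp only [max_def] <;> split_ifs <;> linarith

lemma callFunction_sub_le_measureReal_mul [IsFiniteMeasure μ] (hY : Integrable Y μ)
    (hm : Measurable Y) {x y : ℝ} (hxy : x ≤ y) :
    callFunction μ Y x - callFunction μ Y y ≤ μ.real {ω | x < Y ω} * (y - x) := by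
  have hs : MeasurableSet {ω | x < Y ω} := measurableSet_lt measurable_const hm
  rw [callFunction_sub_callFunction hY, ← smul_eq_mul, ← integral_indicator_const _ hs]
  refine integral_mono ((hY.max_sub_const_zero x).sub (hY.max_sub_const_zero y))
    ((integrable_const _).indicator hs) fun ω => ?_
  simp only [indicator_apply, mem_ofPred_eq]
  split_ifs with h <;> simp only [max_def] <;> split_ifs <;> linarith

lemma tendsto_measureReal_lt_nhdsGT [IsProbabilityMeasure μ] (hm : Measurable Y) (x : ℝ) :
    Tendsto (fun y => μ.real {ω | y < Y ω}) (𝓝[>] x) (𝓝 (μ.real {ω | x < Y ω})) := by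
  have := Measure.isProbabilityMeasure_map (μ := μ) hm.aemeasurable
  have hcdf (y : ℝ) : μ.real {ω | y < Y ω} = 1 - ProbabilityTheory.cdf (μ.map Y) y := by
    rw [ProbabilityTheory.cdf_eq_real, map_measureReal_apply hm measurableSet_Iic,
      ← probReal_compl_eq_one_sub (hm measurableSet_Iic)]
    congr 1
    ext ω
    simp
  simp_rw [hcdf]
  exact (((ProbabilityTheory.cdf (μ.map Y)).right_continuous x).mono
    Ioi_subset_Ici_self).tendsto.const_sub 1

lemma hasDerivWithinAt_callFunction [IsProbabilityMeasure μ] (hY : Integrable Y μ)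
    (hm : Measurable Y) (x : ℝ) :
    HasDerivWithinAt (callFunction μ Y) (-μ.real {ω | x < Y ω}) (Ioi x) x := by
  rw [hasDerivWithinAt_iff_tendsto_slope' (notMem_Ioi.2 le_rfl)]
  refine tendsto_of_tendsto_of_tendsto_of_le_of_le' tendsto_const_nhds
    (tendsto_measureReal_lt_nhdsGT hm x).neg ?_ ?_ <;>
    filter_upwards [self_mem_nhdsWithin] with y (hxy : x < y)
  · rw [slope_def_field, le_div_iff₀ (sub_pos.2 hxy)]
    linarith [callFunction_sub_le_measureReal_mul hY hm hxy.le]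
  · rw [slope_def_field, div_le_iff₀ (sub_pos.2 hxy)]
    linarith [measureReal_mul_le_callFunction_sub hY hm hxy.le]

end CallFunction

section Paths

variable {Ω : Type} {S : ℝ → Ω → ℝ} {B T : ℝ} {ω : Ω}

lemma isGreatest_runMax (hT : 0 ≤ T) (hc : ContinuousOn (fun t => S t ω) (Icc 0 T)) :
    IsGreatest ((fun t => S t ω) '' Icc 0 T) (runMax S T ω) := by
  rw [runMax, iSup, ← image_eq_range (fun t => S t ω)]
  exact (isCompact_Icc.image_of_continuousOn hc).isGreatest_sSup ((nonempty_Icc.2 hT).image _)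

lemma runMax_eq_iSup_nat {u : ℕ → Icc (0:ℝ) T} (hu : DenseRange u)
    (hc : ContinuousOn (fun t => S t ω) (Icc 0 T)) :
    runMax S T ω = ⨆ n, S (u n) ω := by
  rw [runMax, ← hu.ciSup' (f := fun t : Icc (0:ℝ) T => S t ω) hc.domRestrict]
  simp only [iSup]
  congr 1
  ext
  simp

lemma measurable_runMax [MeasurableSpace Ω] (hT : 0 ≤ T)
    (hc : ∀ ω, ContinuousOn (fun t => S t ω) (Icc 0 T))
    (hm : ∀ t ∈ Icc 0 T, Measurable (S t)) : Measurable (runMax S T) := by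
  have : Nonempty (Icc (0:ℝ) T) := ⟨⟨0, left_mem_Icc.2 hT⟩⟩
  obtain ⟨u, hu⟩ := TopologicalSpace.exists_dense_seq (Icc (0:ℝ) T)
  simp_rw [funext fun ω => runMax_eq_iSup_nat hu (hc ω)]
  exact .iSup fun n => hm _ (u n).2

lemma stopVal_of_runMax_lt (hT : 0 ≤ T) (hc : ContinuousOn (fun t => S t ω) (Icc 0 T))
    (h : runMax S T ω < B) : stopVal S B T ω = S T ω := by
  have hnot : ¬ ∃ t ∈ Icc 0 T, S t ω ∈ Ici B := fun ⟨t, ht, hBt⟩ =>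
    (h.trans_le hBt).not_ge ((isGreatest_runMax hT hc).2 ⟨t, ht, rfl⟩)
  rw [stopVal, hittingBtwn, if_neg hnot]

lemma stopVal_of_le_runMax (hT : 0 ≤ T) (hc : ContinuousOn (fun t => S t ω) (Icc 0 T))
    (h0 : S 0 ω < B) (h : B ≤ runMax S T ω) : stopVal S B T ω = B := by
  -- The hitting set is closed, so `B ≤ S τ ω`; before `τ` the path stays below `B`, and
  -- `0 < τ` because `S 0 ω < B`, so continuity from the left gives `S τ ω ≤ B`.
  obtain ⟨t₁, ht₁, hmax : S t₁ ω = runMax S T ω⟩ := (isGreatest_runMax hT hc).1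
  set E := Icc 0 T ∩ {t | S t ω ∈ Ici B}
  have hhit : ∃ t ∈ Icc 0 T, S t ω ∈ Ici B := ⟨t₁, ht₁, h.trans_eq hmax.symm⟩
  set τ := hittingBtwn S (Ici B) 0 T ω
  have hτ : τ = sInf E := by simp only [τ, E, hittingBtwn_def, if_pos hhit]
  have hEclosed : IsClosed E := hc.preimage_isClosed_of_isClosed isClosed_Icc isClosed_Ici
  have hτE : τ ∈ E := hτ ▸ hEclosed.csInf_mem hhit ⟨0, fun t ht => ht.1.1⟩
  have hτpos : 0 < τ := hτE.1.1.lt_of_ne fun h0τ => (h0τ ▸ hτE.2).not_gt h0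
  have hbefore : ∀ t ∈ Ico 0 τ, S t ω ≤ B := fun t ht =>
    (not_le.1 (notMem_of_lt_hittingBtwn ht.2 ht.1)).le
  have hcτ : ContinuousWithinAt (fun t => S t ω) (Ico 0 τ) τ :=
    (hc τ hτE.1).mono fun t ht => ⟨ht.1, ht.2.le.trans hτE.1.2⟩
  have hτle : S τ ω ≤ B := by
    refine hcτ.closure_le ?_ continuousWithinAt_const hbefore
    rw [closure_Ico hτpos.ne]
    exact right_mem_Icc.2 hτpos.le
  exact hτle.antisymm hτE.2

lemma stopVal_ae_eq [MeasurableSpace Ω] {μ : Measure Ω} (hT : 0 ≤ T)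
    (hc : ∀ ω, ContinuousOn (fun t => S t ω) (Icc 0 T)) (h0 : ∀ᵐ ω ∂μ, S 0 ω < B) :
    stopVal S B T =ᵐ[μ] fun ω => if B ≤ runMax S T ω then B else S T ω := by
  filter_upwards [h0] with ω hω
  split_ifs with h
  · exact stopVal_of_le_runMax hT (hc ω) hω h
  · exact stopVal_of_runMax_lt hT (hc ω) (not_le.1 h)

end Paths

theorem stmt_2_general {Ω : Type} [mΩ : MeasurableSpace Ω] (ℙ : Measure Ω) [IsProbabilityMeasure ℙ]
    (ℱ : Filtration ℝ mΩ) (S : ℝ → Ω → ℝ) (s₀ T : ℝ) (hT : 0 < T)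
    (hS : IsPosContMart ℙ ℱ S s₀ T) (B : ℝ) (hB : s₀ < B) :
    ConvexOn ℝ univ (fun x => ∫ ω, max (stopVal S B T ω - x) 0 ∂ℙ) ∧
    ∀ x, 0 ≤ x → x < B →
      ∃ d : ℝ,
        HasDerivWithinAt (fun y => ∫ ω, max (stopVal S B T ω - y) 0 ∂ℙ) d (Ioi x) x ∧
        (ℙ {ω | x < S T ω ∧ runMax S T ω < B}).toReal
          = -d - (ℙ {ω | B ≤ runMax S T ω}).toReal := by
  have hmS (t : ℝ) (ht : t ∈ Icc 0 T) : Measurable (S t) :=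
    (hS.adapted t ht).measurable.mono (ℱ.le t) le_rfl
  have hhit : MeasurableSet {ω | B ≤ runMax S T ω} :=
    measurableSet_le measurable_const (measurable_runMax hT.le hS.contPaths hmS)
  set Y : Ω → ℝ := fun ω => if B ≤ runMax S T ω then B else S T ω
  have hYm : Measurable Y := .ite hhit measurable_const (hmS T (right_mem_Icc.2 hT.le))
  have hYi : Integrable Y ℙ :=
    Integrable.piecewise (s := {ω | B ≤ runMax S T ω}) hhit (integrable_const B).integrableOn
      (hS.integrable T (right_mem_Icc.2 hT.le)).integrableOn
  have hcall : callFunction ℙ (stopVal S B T) = callFunction ℙ Y :=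
    callFunction_congr_ae <| stopVal_ae_eq hT.le hS.contPaths <| hS.init.mono fun ω h => h ▸ hB
  refine ⟨?_, fun x _ hxB => ⟨-ℙ.real {ω | x < Y ω}, ?_, ?_⟩⟩
  · change ConvexOn ℝ univ (callFunction ℙ (stopVal S B T))
    rw [hcall]
    exact convexOn_callFunction hYi
  · change HasDerivWithinAt (callFunction ℙ (stopVal S B T)) _ _ _
    rw [hcall]
    exact hasDerivWithinAt_callFunction hYi hYm x
  have hsplit :
      {ω | x < Y ω} = {ω | x < S T ω ∧ runMax S T ω < B} ∪ {ω | B ≤ runMax S T ω} := by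
    ext ω
    rcases le_or_gt B (runMax S T ω) with h | h <;> simp [Y, h, not_lt_of_ge, not_le_of_gt, hxB]
  have hdisj : Disjoint {ω | x < S T ω ∧ runMax S T ω < B} {ω | B ≤ runMax S T ω} :=
    disjoint_left.2 fun ω h₁ h₂ => h₁.2.not_ge h₂
  change ℙ.real _ = _ - ℙ.real _
  rw [hsplit, measureReal_union hdisj hhit]
  ring

/-- For `B > s₀`, the function `𝔠^B(x) = E[(S_{T∧H_B} − x)⁺]` is convex,
and for every `x ∈ [0,B)`,
`ℙ(S_T > x, M_T < B) = −(right derivative of 𝔠^B at x) − ℙ(M_T ≥ B)`. -/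
theorem stmt_2 {Ω : Type} [mΩ : MeasurableSpace Ω] (ℙ : Measure Ω) [IsProbabilityMeasure ℙ]
    (ℱ : Filtration ℝ mΩ) (S : ℝ → Ω → ℝ) (s₀ T : ℝ) (hs₀ : 0 < s₀) (hT : 0 < T)
    (hS : IsPosContMart ℙ ℱ S s₀ T) (B : ℝ) (hB : s₀ < B) :
    ConvexOn ℝ univ (fun x => ∫ ω, max (stopVal S B T ω - x) 0 ∂ℙ) ∧
    ∀ x, 0 ≤ x → x < B →
      ∃ d : ℝ,
        HasDerivWithinAt (fun y => ∫ ω, max (stopVal S B T ω - y) 0 ∂ℙ) d (Ioi x) x ∧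
        (ℙ {ω | x < S T ω ∧ runMax S T ω < B}).toReal
          = -d - (ℙ {ω | B ≤ runMax S T ω}).toReal :=
  stmt_2_general (mΩ := mΩ) ℙ ℱ S s₀ T hT hS B hB
end
end

section
/- Let B > s₀ and define 𝔠^B(x) := E[(S_{T∧H_B} − x)⁺] for x ∈ ℝ. Then ℙ(M_T ≥ B) = ℙ(H_B ≤ T) = ℙ(S_{T∧H_B} = B), and the left derivative of 𝔠^B at B equals −ℙ(M_T ≥ B). -/
open MeasureTheory Set Filter

noncomputable section

/-!
Since `S₀ < B`, a continuous path cannot jump over `B`: at the first hitting time of `[B, ∞)` it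
sits exactly at `B` if it hits at all, and stays below `B` otherwise. Hence `V := S_{T ∧ H_B}`
satisfies `V ≤ B` a.s., and `{V = B} = {H_B ≤ T} = {M_T ≥ B}` up to a null set. For `x < B` the
difference quotient of `𝔠^B` between `x` and `B` is `-E[(V - x)⁺ / (B - x)]`, whose integrand is
bounded by `1` and tends to `1_{V = B}`; dominated convergence gives the left derivative.
-/

open Topology TopologicalSpace

section HittingTime

variable {Ω β ι : Type*} [ConditionallyCompleteLinearOrder ι] [TopologicalSpace ι]
  [OrderTopology ι] [TopologicalSpace β] {u : ι → Ω → β} {s : Set β} {n m : ι} {ω : Ω}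

theorem hittingBtwn_mem_set_of_isClosed (hs : IsClosed s) (hu : ContinuousOn (u · ω) (Icc n m))
    (h_exists : ∃ j ∈ Icc n m, u j ω ∈ s) : u (hittingBtwn u s n m ω) ω ∈ s := by
  have h_closed : IsClosed (Icc n m ∩ (u · ω) ⁻¹' s) :=
    hu.preimage_isClosed_of_isClosed isClosed_Icc hs
  obtain ⟨j, hj, hjs⟩ := h_exists
  rw [hittingBtwn, if_pos ⟨j, hj, hjs⟩]
  exact (h_closed.csInf_mem ⟨j, hj, hjs⟩ bddBelow_Icc.inter_of_left).2

theorem hittingBtwn_le_iff_of_lt_of_isClosed (hs : IsClosed s)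
    (hu : ContinuousOn (u · ω) (Icc n m)) {i : ι} (hi : i < m) :
    hittingBtwn u s n m ω ≤ i ↔ ∃ j ∈ Icc n i, u j ω ∈ s := by
  refine ⟨fun h => ?_, fun ⟨j, hj, hjs⟩ =>
    (hittingBtwn_le_of_mem hj.1 (hj.2.trans hi.le) hjs).trans hj.2⟩
  have h_exists : ∃ j ∈ Icc n m, u j ω ∈ s := by
    by_contra h_not
    rw [hittingBtwn, if_neg h_not] at h
    exact h.not_gt hi
  exact ⟨_, ⟨le_hittingBtwn_of_exists h_exists, h⟩,
    hittingBtwn_mem_set_of_isClosed hs hu h_exists⟩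

end HittingTime

section FirstPassage

variable {Ω : Type*} {u : ℝ → Ω → ℝ} {B n m : ℝ} {ω : Ω}

theorem apply_hittingBtwn_Ici_le (hnm : n ≤ m) (hu : ContinuousOn (u · ω) (Icc n m))
    (hn : u n ω < B) : u (hittingBtwn u (Ici B) n m ω) ω ≤ B := by
  set τ := hittingBtwn u (Ici B) n m ω
  by_cases h_exists : ∃ j ∈ Icc n m, u j ω ∈ Ici B
  · have hτ_mem : B ≤ u τ ω := hittingBtwn_mem_set_of_isClosed isClosed_Ici hu h_exists
    have hnτ : n ≠ τ := fun h => hn.not_ge (h ▸ hτ_mem)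
    have h_closure : τ ∈ closure (Ico n τ) := by
      rw [closure_Ico hnτ]
      exact ⟨le_hittingBtwn_of_exists h_exists, le_rfl⟩
    have h_cont : ContinuousWithinAt (u · ω) (Ico n τ) τ :=
      (hu τ (hittingBtwn_mem_Icc hnm ω)).mono
        fun t ht => ⟨ht.1, ht.2.le.trans (hittingBtwn_le ω)⟩
    have h_below : (u · ω) '' Ico n τ ⊆ Iic B := by
      rintro _ ⟨t, ht, rfl⟩
      exact (not_le.1 (notMem_of_lt_hittingBtwn ht.2 ht.1)).le
    exact closure_minimal h_below isClosed_Iic (h_cont.mem_closure_image h_closure)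
  · have hτ : τ = m := by simp only [τ, hittingBtwn, if_neg h_exists]
    exact hτ ▸ (not_le.1 fun h => h_exists ⟨m, ⟨hnm, le_rfl⟩, h⟩).le

theorem apply_hittingBtwn_Ici_eq_iff (hnm : n ≤ m) (hu : ContinuousOn (u · ω) (Icc n m))
    (hn : u n ω < B) :
    u (hittingBtwn u (Ici B) n m ω) ω = B ↔ ∃ j ∈ Icc n m, B ≤ u j ω :=
  ⟨fun h => ⟨_, hittingBtwn_mem_Icc hnm ω, h.ge⟩, fun h =>
    (apply_hittingBtwn_Ici_le hnm hu hn).antisymm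
      (hittingBtwn_mem_set_of_isClosed isClosed_Ici hu h)⟩

end FirstPassage

theorem IsCompact.exists_le_iff_le_iSup_of_subset_closure {α : Type*} [TopologicalSpace α]
    {K D : Set α} (hK : IsCompact K) (hDK : D ⊆ K) (hKD : K ⊆ closure D) (hD : D.Nonempty)
    {f : α → ℝ} (hf : ContinuousOn f K) {B : ℝ} :
    (∃ t ∈ K, B ≤ f t) ↔ B ≤ ⨆ t : D, f t := by
  have : Nonempty D := hD.to_subtype
  have h_bdd : BddAbove (range fun t : D => f t) := by
    rw [← image_eq_range]
    exact (hK.bddAbove_image hf).mono (image_mono hDK)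
  constructor
  · rintro ⟨t, ht, hBt⟩
    have h_le : f '' D ⊆ Iic (⨆ t : D, f t) := by
      rintro _ ⟨t, ht, rfl⟩
      exact le_ciSup h_bdd ⟨t, ht⟩
    exact hBt.trans
      (closure_minimal h_le isClosed_Iic (((hf t ht).mono hDK).mem_closure_image (hKD ht)))
  · intro h
    obtain ⟨t₀, ht₀, h_max⟩ := hK.exists_isMaxOn (hD.mono hDK) hf
    exact ⟨t₀, ht₀, h.trans (ciSup_le fun t => h_max (hDK t.2))⟩

section Measurability

variable {Ω : Type*} [MeasurableSpace Ω]

theorem measurableSet_exists_le_of_continuousOn {α : Type*} [TopologicalSpace α]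
    [PseudoMetrizableSpace α] [SeparableSpace α] {K : Set α} (hK : IsCompact K)
    {S : α → Ω → ℝ} (hS : ∀ t ∈ K, Measurable (S t)) (hc : ∀ ω, ContinuousOn (S · ω) K) (B : ℝ) :
    MeasurableSet {ω | ∃ t ∈ K, B ≤ S t ω} := by
  rcases K.eq_empty_or_nonempty with rfl | hK_ne
  · simp
  obtain ⟨D, hDK, hD_count, hKD⟩ :=
    (IsSeparable.of_separableSpace K).exists_countable_dense_subset
  have : Countable D := hD_count.to_subtype
  have hD : D.Nonempty := closure_nonempty_iff.1 (hK_ne.mono hKD)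
  have h_eq : {ω | ∃ t ∈ K, B ≤ S t ω} = {ω | B ≤ ⨆ t : D, S t ω} :=
    ext fun ω => hK.exists_le_iff_le_iSup_of_subset_closure hDK hKD hD (hc ω)
  rw [h_eq]
  exact measurableSet_le measurable_const (Measurable.iSup fun t : D => hS t (hDK t.2))

variable {S : ℝ → Ω → ℝ} {B n m : ℝ}

theorem measurable_hittingBtwn_Ici (hS : ∀ t ∈ Icc n m, Measurable (S t))
    (hc : ∀ ω, ContinuousOn (S · ω) (Icc n m)) : Measurable (hittingBtwn S (Ici B) n m) := by
  refine measurable_of_Iic fun i => ?_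
  rcases lt_or_ge i m with hi | hi
  · have h_eq : hittingBtwn S (Ici B) n m ⁻¹' Iic i = {ω | ∃ t ∈ Icc n i, B ≤ S t ω} :=
      ext fun ω => hittingBtwn_le_iff_of_lt_of_isClosed isClosed_Ici (hc ω) hi
    rw [h_eq]
    exact measurableSet_exists_le_of_continuousOn isCompact_Icc
      (fun t ht => hS t ⟨ht.1, ht.2.trans hi.le⟩)
      (fun ω => (hc ω).mono (Icc_subset_Icc_right hi.le)) B
  · convert MeasurableSet.univ
    exact eq_univ_of_forall fun ω => (hittingBtwn_le ω).trans hi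

theorem measurable_apply_hittingBtwn_Ici (hnm : n ≤ m) (hS : ∀ t ∈ Icc n m, Measurable (S t))
    (hc : ∀ ω, ContinuousOn (S · ω) (Icc n m)) :
    Measurable fun ω => S (hittingBtwn S (Ici B) n m ω) ω := by
  set S' : ℝ → Ω → ℝ := fun t => S (projIcc n m hnm t)
  have hS' : Measurable (Function.uncurry S') :=
    measurable_uncurry_of_continuous_of_measurable
      (fun ω => (hc ω).comp_continuous (continuous_subtype_val.comp continuous_projIcc)
        fun t => (projIcc n m hnm t).2)
      (fun t => hS _ (projIcc n m hnm t).2)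
  convert hS'.comp ((measurable_hittingBtwn_Ici (B := B) hS hc).prodMk measurable_id) using 1
  funext ω
  simp [S', projIcc_of_mem hnm (hittingBtwn_mem_Icc hnm ω)]

end Measurability

section LeftDerivative

variable {Ω : Type*} [MeasurableSpace Ω] {μ : Measure Ω} [IsFiniteMeasure μ] {V : Ω → ℝ} {B : ℝ}

theorem tendsto_integral_max_sub_div_nhdsLT (hV : Measurable V) (hVB : ∀ᵐ ω ∂μ, V ω ≤ B) :
    Tendsto (fun x => ∫ ω, max (V ω - x) 0 / (B - x) ∂μ) (𝓝[<] B)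
      (𝓝 (μ.real {ω | V ω = B})) := by
  have h_meas : MeasurableSet {ω | V ω = B} := hV (measurableSet_singleton B)
  rw [← integral_indicator_one h_meas]
  refine tendsto_integral_filter_of_dominated_convergence (fun _ => 1)
    (Eventually.of_forall fun x =>
      (((hV.sub_const x).max measurable_const).div_const _).aestronglyMeasurable)
    ?_ (integrable_const 1) ?_
  · filter_upwards [self_mem_nhdsWithin] with x (hx : x < B)
    filter_upwards [hVB] with ω hω
    have hBx : 0 < B - x := sub_pos.2 hx
    rw [Real.norm_eq_abs, abs_of_nonneg (div_nonneg (le_max_right _ _) hBx.le),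
      div_le_one hBx]
    exact max_le (by linarith) hBx.le
  · filter_upwards [hVB] with ω hω
    rcases hω.eq_or_lt with h | h
    · rw [indicator_of_mem (show ω ∈ {ω | V ω = B} from h)]
      refine tendsto_const_nhds.congr' ?_
      filter_upwards [self_mem_nhdsWithin] with x (hx : x < B)
      rw [Pi.one_apply, h, max_eq_left (sub_pos.2 hx).le, div_self (sub_pos.2 hx).ne']
    · rw [indicator_of_notMem (show ω ∉ {ω | V ω = B} from h.ne)]
      refine tendsto_const_nhds.congr' ?_
      filter_upwards [Ioo_mem_nhdsLT h] with x hx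
      rw [max_eq_right (sub_nonpos.2 hx.1.le), zero_div]

theorem hasDerivWithinAt_integral_max_sub_Iio (hV : Measurable V) (hVB : ∀ᵐ ω ∂μ, V ω ≤ B) :
    HasDerivWithinAt (fun x => ∫ ω, max (V ω - x) 0 ∂μ) (-μ.real {ω | V ω = B}) (Iio B) B := by
  have h_zero : ∫ ω, max (V ω - B) 0 ∂μ = 0 :=
    integral_eq_zero_of_ae (hVB.mono fun ω h => max_eq_right (sub_nonpos.2 h))
  rw [hasDerivWithinAt_iff_tendsto_slope, sdiff_singleton_eq_self self_notMem_Iio]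
  refine (tendsto_integral_max_sub_div_nhdsLT hV hVB).neg.congr' ?_
  filter_upwards [self_mem_nhdsWithin] with x _
  rw [slope_def_field, h_zero, sub_zero, integral_div, ← neg_sub B x, div_neg]

end LeftDerivative

theorem stmt_9_general {Ω : Type} [mΩ : MeasurableSpace Ω] (ℙ : Measure Ω) [IsProbabilityMeasure ℙ]
    (ℱ : Filtration ℝ mΩ) (S : ℝ → Ω → ℝ) (s₀ T : ℝ) (hT : 0 < T)
    (hS : IsPosContMart ℙ ℱ S s₀ T) (B : ℝ) (hB : s₀ < B) :
    ℙ {ω | B ≤ runMax S T ω} = ℙ (hitEvent S B T) ∧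
    ℙ (hitEvent S B T) = ℙ {ω | stopVal S B T ω = B} ∧
    HasDerivWithinAt (fun x => ∫ ω, max (stopVal S B T ω - x) 0 ∂ℙ)
      (-(ℙ {ω | B ≤ runMax S T ω}).toReal) (Iio B) B := by
  have h_runMax : {ω | B ≤ runMax S T ω} = hitEvent S B T :=
    ext fun ω => (isCompact_Icc.exists_le_iff_le_iSup_of_subset_closure subset_rfl
      subset_closure (nonempty_Icc.2 hT.le) (hS.contPaths ω)).symm
  have h_start : ∀ᵐ ω ∂ℙ, S 0 ω < B := hS.init.mono fun ω h => h ▸ hB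
  have h_hit : ℙ (hitEvent S B T) = ℙ {ω | stopVal S B T ω = B} :=
    measure_congr <| eventuallyEq_set.2 <| h_start.mono fun ω h0 =>
      (apply_hittingBtwn_Ici_eq_iff hT.le (hS.contPaths ω) h0).symm
  have h_meas : Measurable (stopVal S B T) :=
    measurable_apply_hittingBtwn_Ici hT.le
      (fun t ht => ((hS.adapted t ht).mono (ℱ.le t)).measurable) hS.contPaths
  refine ⟨by rw [h_runMax], h_hit, ?_⟩
  rw [h_runMax, h_hit, ← measureReal_def]
  exact hasDerivWithinAt_integral_max_sub_Iio h_meas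
    (h_start.mono fun ω h0 => apply_hittingBtwn_Ici_le hT.le (hS.contPaths ω) h0)

/-- For `B > s₀` and `𝔠^B(x) = E[(S_{T∧H_B} − x)⁺]`:
`ℙ(M_T ≥ B) = ℙ(H_B ≤ T) = ℙ(S_{T∧H_B} = B)`, and the left derivative of `𝔠^B` at `B`
equals `−ℙ(M_T ≥ B)`. -/
theorem stmt_9 {Ω : Type} [mΩ : MeasurableSpace Ω] (ℙ : Measure Ω) [IsProbabilityMeasure ℙ]
    (ℱ : Filtration ℝ mΩ) (S : ℝ → Ω → ℝ) (s₀ T : ℝ) (hs₀ : 0 < s₀) (hT : 0 < T)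
    (hS : IsPosContMart ℙ ℱ S s₀ T) (B : ℝ) (hB : s₀ < B) :
    ℙ {ω | B ≤ runMax S T ω} = ℙ (hitEvent S B T) ∧
    ℙ (hitEvent S B T) = ℙ {ω | stopVal S B T ω = B} ∧
    HasDerivWithinAt (fun x => ∫ ω, max (stopVal S B T ω - x) 0 ∂ℙ)
      (-(ℙ {ω | B ≤ runMax S T ω}).toReal) (Iio B) B :=
  stmt_9_general (mΩ := mΩ) ℙ ℱ S s₀ T hT hS B hB
end
end

section
/- Let s₀ < B ≤ B'. Then for every x ∈ ℝ: E[(S_{T∧H_{B'}} − x)⁺] − E[(S_{T∧H_B} − x)⁺] + ℙ(M_T ≥ B)·(B − x)⁺ = E[ 1_{H_B ≤ T} · (S_{T∧H_{B'}} − x)⁺ ]. In particular, the function x ↦ E[(S_{T∧H_{B'}} − x)⁺] − E[(S_{T∧H_B} − x)⁺] + ℙ(M_T ≥ B)·(B − x)⁺ is convex on ℝ. -/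
/-!
For a continuous path started below `B`, the stopped value `S_{T∧H_B}` is `B` on `{H_B ≤ T}`
(the first passage above `B` is a passage through `B`) and `S_T` off it. As
`{H_{B'} ≤ T} ⊆ {H_B ≤ T} = {M_T ≥ B}`, the two stopped values agree off `{H_B ≤ T}`, so splitting
both expectations along this event leaves exactly `E[1_{H_B ≤ T} (S_{T∧H_{B'}} − x)⁺]`, an
integral of convex functions of `x`.
-/

open MeasureTheory Set Filter

noncomputable section

lemma hittingBtwn_mem_of_isClosed {ι Ω β : Type*} [ConditionallyCompleteLinearOrder ι]
    [TopologicalSpace ι] [OrderTopology ι] [TopologicalSpace β] {u : ι → Ω → β} {s : Set β}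
    {n m : ι} {ω : Ω} (hs : IsClosed s) (hu : ContinuousOn (fun t => u t ω) (Icc n m))
    (h_exists : ∃ j ∈ Icc n m, u j ω ∈ s) : u (hittingBtwn u s n m ω) ω ∈ s := by
  have hclosed : IsClosed (Icc n m ∩ {i | u i ω ∈ s}) :=
    hu.preimage_isClosed_of_isClosed isClosed_Icc hs
  rw [hittingBtwn, if_pos h_exists]
  exact (hclosed.csInf_mem h_exists bddBelow_Icc.inter_of_left).2

lemma exists_rat_mem_Icc_lt_of_continuousOn {f : ℝ → ℝ} {T c t : ℝ} (hT : 0 < T)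
    (hf : ContinuousOn f (Icc 0 T)) (ht : t ∈ Icc 0 T) (hc : c < f t) :
    ∃ q : ℚ, (q : ℝ) ∈ Icc 0 T ∧ c < f q := by
  obtain ⟨u, hu, hpre⟩ := continuousOn_iff'.1 hf (Ioi c) isOpen_Ioi
  have htu : t ∈ u := (hpre ▸ ⟨hc, ht⟩ : t ∈ u ∩ Icc 0 T).1
  have hne : (u ∩ Ioo 0 T).Nonempty :=
    mem_closure_iff.1 ((closure_Ioo hT.ne).symm ▸ ht) u hu htu
  obtain ⟨q, hqu, hq⟩ := Rat.denseRange_cast.exists_mem_open (hu.inter isOpen_Ioo) hne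
  have hq' : (q : ℝ) ∈ f ⁻¹' Ioi c ∩ Icc 0 T := hpre ▸ ⟨hqu, Ioo_subset_Icc_self hq⟩
  exact ⟨q, hq'.2, hq'.1⟩

section Integrals

variable {Ω : Type*} [MeasurableSpace Ω] {μ : Measure Ω}

lemma integral_sub_integral_add_measureReal_mul {F G : Ω → ℝ} {E : Set Ω} {c : ℝ}
    (hE : MeasurableSet E) (hF : Integrable F μ) (hG : Integrable G μ)
    (hFc : ∀ᵐ ω ∂μ, ω ∈ E → F ω = c) (hFG : ∀ᵐ ω ∂μ, ω ∉ E → F ω = G ω) :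
    ∫ ω, G ω ∂μ - ∫ ω, F ω ∂μ + μ.real E * c = ∫ ω in E, G ω ∂μ := by
  have hFE : ∫ ω in E, F ω ∂μ = μ.real E * c := by
    rw [setIntegral_congr_ae hE hFc, setIntegral_const, smul_eq_mul]
  have hFGc : ∫ ω in Eᶜ, F ω ∂μ = ∫ ω in Eᶜ, G ω ∂μ := setIntegral_congr_ae hE.compl hFG
  rw [← integral_add_compl hE hF, ← integral_add_compl hE hG, hFE, hFGc]
  ring

lemma convexOn_integral_max_sub [IsFiniteMeasure μ] {X : Ω → ℝ} (hX : Integrable X μ) :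
    ConvexOn ℝ univ fun x => ∫ ω, max (X ω - x) 0 ∂μ :=
  integral_convexOn_of_integrand_ae convex_univ
    (ae_of_all _ fun ω => ((convexOn_const (X ω) convex_univ).sub
      (concaveOn_id convex_univ)).sup (convexOn_const 0 convex_univ))
    fun x _ => (hX.sub (integrable_const x)).pos_part

end Integrals

section StoppedValue

variable {Ω : Type} (S : ℝ → Ω → ℝ) {B T : ℝ}

lemma hitEvent_anti : Antitone fun B => hitEvent S B T :=
  fun _ _ hBB' _ => Exists.imp fun _ => And.imp_right hBB'.trans

lemma stopVal_of_notMem_hitEvent {ω : Ω} (h : ω ∉ hitEvent S B T) :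
    stopVal S B T ω = S T ω := by
  have hne : ¬ ∃ j ∈ Icc (0 : ℝ) T, S j ω ∈ Ici B := h
  rw [stopVal, hittingBtwn, if_neg hne]

lemma stopVal_of_mem_hitEvent {ω : Ω} (hc : ContinuousOn (fun t => S t ω) (Icc 0 T))
    (h0 : S 0 ω < B) (h : ω ∈ hitEvent S B T) : stopVal S B T ω = B := by
  set H := hittingBtwn S (Ici B) 0 T ω
  have hH : H ∈ Icc 0 T := hittingBtwn_mem_Icc (h.elim fun t ht => ht.1.1.trans ht.1.2) ω
  have hBH : B ≤ S H ω := hittingBtwn_mem_of_isClosed isClosed_Ici hc h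
  obtain ⟨u, hu, huB⟩ := intermediate_value_Icc hH.1 (hc.mono (Icc_subset_Icc le_rfl hH.2))
    ⟨h0.le, hBH⟩
  have hHu : H ≤ u := hittingBtwn_le_of_mem hu.1 (hu.2.trans hH.2) huB.ge
  change S H ω = B
  rw [← le_antisymm hu.2 hHu]
  exact huB

lemma le_runMax_iff {ω : Ω} (hT : 0 ≤ T) (hc : ContinuousOn (fun t => S t ω) (Icc 0 T)) :
    B ≤ runMax S T ω ↔ ω ∈ hitEvent S B T := by
  obtain ⟨t₀, ht₀, hmax⟩ := isCompact_Icc.exists_isMaxOn (nonempty_Icc.2 hT) hc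
  have : Nonempty (Icc 0 T) := ⟨⟨t₀, ht₀⟩⟩
  have hbdd : BddAbove (range fun t : Icc 0 T => S t ω) :=
    ⟨S t₀ ω, by rintro _ ⟨t, rfl⟩; exact hmax t.2⟩
  constructor
  · exact fun hB => ⟨t₀, ht₀, hB.trans (ciSup_le fun t => hmax t.2)⟩
  · rintro ⟨t, ht, hBt⟩
    exact hBt.trans (le_ciSup hbdd ⟨t, ht⟩)

lemma setOf_le_runMax_eq_hitEvent (hT : 0 ≤ T)
    (hc : ∀ ω, ContinuousOn (fun t => S t ω) (Icc 0 T)) :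
    {ω | B ≤ runMax S T ω} = hitEvent S B T :=
  ext fun ω => le_runMax_iff S hT (hc ω)

lemma hitEvent_eq_iInter_iUnion_rat (hT : 0 < T)
    (hc : ∀ ω, ContinuousOn (fun t => S t ω) (Icc 0 T)) :
    hitEvent S B T =
      ⋂ n : ℕ, ⋃ q : ℚ, ⋃ _ : (q : ℝ) ∈ Icc 0 T, {ω | B - 1 / (n + 1) < S q ω} := by
  ext ω
  simp only [hitEvent, mem_ofPred_eq, mem_iInter, mem_iUnion, exists_prop]
  constructor
  · rintro ⟨t, ht, hBt⟩ n
    exact exists_rat_mem_Icc_lt_of_continuousOn hT (hc ω) ht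
      (by linarith [show (0 : ℝ) < 1 / (n + 1) by positivity])
  · intro h
    obtain ⟨t₀, ht₀, hmax⟩ := isCompact_Icc.exists_isMaxOn (nonempty_Icc.2 hT.le) (hc ω)
    refine ⟨t₀, ht₀, not_lt.1 fun hlt => ?_⟩
    obtain ⟨n, hn⟩ := exists_nat_one_div_lt (sub_pos.2 hlt)
    obtain ⟨q, hq, hBq⟩ := h n
    linarith [show S q ω ≤ S t₀ ω from hmax hq]

lemma measurableSet_hitEvent [MeasurableSpace Ω] (hT : 0 < T)
    (hc : ∀ ω, ContinuousOn (fun t => S t ω) (Icc 0 T))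
    (hmeas : ∀ t ∈ Icc 0 T, Measurable (S t)) : MeasurableSet (hitEvent S B T) := by
  rw [hitEvent_eq_iInter_iUnion_rat S hT hc]
  exact .iInter fun n => .iUnion fun q => .iUnion fun hq =>
    measurableSet_lt measurable_const (hmeas q hq)

lemma integrable_stopVal [MeasurableSpace Ω] {μ : Measure Ω} [IsFiniteMeasure μ]
    (hc : ∀ ω, ContinuousOn (fun t => S t ω) (Icc 0 T)) (h0 : ∀ᵐ ω ∂μ, S 0 ω < B)
    (hE : MeasurableSet (hitEvent S B T)) (hint : Integrable (S T) μ) :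
    Integrable (stopVal S B T) μ := by
  classical
  refine (Integrable.piecewise hE (integrable_const B).integrableOn hint.integrableOn).congr ?_
  filter_upwards [h0] with ω hω
  by_cases h : ω ∈ hitEvent S B T
  · simp [h, stopVal_of_mem_hitEvent S (hc ω) hω h]
  · simp [h, stopVal_of_notMem_hitEvent S h]

lemma integral_max_stopVal_sub_eq_setIntegral_hitEvent [MeasurableSpace Ω] {μ : Measure Ω}
    [IsFiniteMeasure μ] {B' : ℝ} (hc : ∀ ω, ContinuousOn (fun t => S t ω) (Icc 0 T))
    (h0 : ∀ᵐ ω ∂μ, S 0 ω < B) (hBB' : B ≤ B') (hE : MeasurableSet (hitEvent S B T))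
    (hint : Integrable (stopVal S B T) μ) (hint' : Integrable (stopVal S B' T) μ) (x : ℝ) :
    (∫ ω, max (stopVal S B' T ω - x) 0 ∂μ) - (∫ ω, max (stopVal S B T ω - x) 0 ∂μ)
        + μ.real (hitEvent S B T) * max (B - x) 0
      = ∫ ω in hitEvent S B T, max (stopVal S B' T ω - x) 0 ∂μ := by
  refine integral_sub_integral_add_measureReal_mul hE (hint.sub (integrable_const x)).pos_part
    (hint'.sub (integrable_const x)).pos_part ?_ (ae_of_all _ fun ω hω => ?_)
  · filter_upwards [h0] with ω hω hmem
    rw [stopVal_of_mem_hitEvent S (hc ω) hω hmem]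
  · rw [stopVal_of_notMem_hitEvent S hω,
      stopVal_of_notMem_hitEvent S fun h => hω (hitEvent_anti S hBB' h)]

end StoppedValue

theorem stmt_10_general {Ω : Type} [mΩ : MeasurableSpace Ω] (ℙ : Measure Ω) [IsProbabilityMeasure ℙ]
    (ℱ : Filtration ℝ mΩ) (S : ℝ → Ω → ℝ) (s₀ T : ℝ) (hT : 0 < T)
    (hS : IsPosContMart ℙ ℱ S s₀ T) (B B' : ℝ) (hB : s₀ < B) (hBB' : B ≤ B') :
    (∀ x : ℝ,
      (∫ ω, max (stopVal S B' T ω - x) 0 ∂ℙ) - (∫ ω, max (stopVal S B T ω - x) 0 ∂ℙ)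
          + (ℙ {ω | B ≤ runMax S T ω}).toReal * max (B - x) 0
        = ∫ ω in hitEvent S B T, max (stopVal S B' T ω - x) 0 ∂ℙ) ∧
    ConvexOn ℝ univ (fun x =>
      (∫ ω, max (stopVal S B' T ω - x) 0 ∂ℙ) - (∫ ω, max (stopVal S B T ω - x) 0 ∂ℙ)
        + (ℙ {ω | B ≤ runMax S T ω}).toReal * max (B - x) 0) := by
  have hmeas : ∀ t ∈ Icc 0 T, Measurable (S t) := fun t ht =>
    (hS.adapted t ht).measurable.mono (ℱ.le t) le_rfl
  have hE : ∀ C, MeasurableSet (hitEvent S C T) := fun _ =>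
    measurableSet_hitEvent S hT hS.contPaths hmeas
  have h0 : ∀ C, s₀ < C → ∀ᵐ ω ∂ℙ, S 0 ω < C := fun _ hC =>
    hS.init.mono fun _ hω => hω ▸ hC
  have hint : ∀ C, s₀ < C → Integrable (stopVal S C T) ℙ := fun C hC =>
    integrable_stopVal S hS.contPaths (h0 C hC) (hE C) (hS.integrable T ⟨hT.le, le_rfl⟩)
  have hkey := integral_max_stopVal_sub_eq_setIntegral_hitEvent S hS.contPaths (h0 B hB) hBB'
    (hE B) (hint B hB) (hint B' (hB.trans_le hBB'))
  rw [setOf_le_runMax_eq_hitEvent S hT.le hS.contPaths, ← measureReal_def]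
  refine ⟨hkey, ?_⟩
  convert convexOn_integral_max_sub (μ := ℙ.restrict (hitEvent S B T))
    (hint B' (hB.trans_le hBB')).restrict using 1
  exact funext hkey

/-- For `s₀ < B ≤ B'` and every `x`,
`E[(S_{T∧H_{B'}} − x)⁺] − E[(S_{T∧H_B} − x)⁺] + ℙ(M_T ≥ B)·(B − x)⁺
  = E[1_{H_B ≤ T}·(S_{T∧H_{B'}} − x)⁺]`;
in particular the left-hand side is a convex function of `x` on `ℝ`. -/
theorem stmt_10 {Ω : Type} [mΩ : MeasurableSpace Ω] (ℙ : Measure Ω) [IsProbabilityMeasure ℙ]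
    (ℱ : Filtration ℝ mΩ) (S : ℝ → Ω → ℝ) (s₀ T : ℝ) (hs₀ : 0 < s₀) (hT : 0 < T)
    (hS : IsPosContMart ℙ ℱ S s₀ T) (B B' : ℝ) (hB : s₀ < B) (hBB' : B ≤ B') :
    (∀ x : ℝ,
      (∫ ω, max (stopVal S B' T ω - x) 0 ∂ℙ) - (∫ ω, max (stopVal S B T ω - x) 0 ∂ℙ)
          + (ℙ {ω | B ≤ runMax S T ω}).toReal * max (B - x) 0
        = ∫ ω in hitEvent S B T, max (stopVal S B' T ω - x) 0 ∂ℙ) ∧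
    ConvexOn ℝ univ (fun x =>
      (∫ ω, max (stopVal S B' T ω - x) 0 ∂ℙ) - (∫ ω, max (stopVal S B T ω - x) 0 ∂ℙ)
        + (ℙ {ω | B ≤ runMax S T ω}).toReal * max (B - x) 0) :=
  stmt_10_general (mΩ := mΩ) ℙ ℱ S s₀ T hT hS B B' hB hBB'
end
end
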